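/- arXiv:2502.06751 — 3 statements merged into one kernel-verified Lean document; each statement's English description precedes it below -/
import Mathlib

section
/- Consider the line graph on vertices {0,...,n-1} with edges (i,i) and (i,i+1) for each i, and let W be its lazy random-walk matrix (each non-terminal vertex stays or moves right with probability 1/2). Starting from vertex n-i-1, the probability of not being at the terminal vertex n-1 after t steps equals ∑_{j<i} C(t,j) 2^{-t}. -/
/-!
From a non-terminal vertex the walk moves right after a fair coin flip, and the terminal vertex
absorbs, so from distance `i` it is still short of the end after `t` steps iff fewer than `i` of
`t` fair flips came up heads. In matrix form: the entry of `W ^ (t + 1)` at a non-terminal column is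
the average of the entries of `W ^ t` at that column and the next one, which is Pascal's rule for
the binomial lower tail.
-/

open Matrix Finset

/-- Column-stochastic: `lazyLineWalk n a b` is the probability of a step from `b` to `a`. -/
noncomputable def lazyLineWalk (n : ℕ) : Matrix (Fin n) (Fin n) ℝ :=
  Matrix.of fun a b =>
    if (b : ℕ) = n - 1 then (if a = b then 1 else 0)
    else if a = b ∨ (a : ℕ) = (b : ℕ) + 1 then 1 / 2 else 0

noncomputable def binomialLowerTail (t i : ℕ) : ℝ := ∑ j ∈ range i, (t.choose j : ℝ) / 2 ^ t

@[simp]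
lemma binomialLowerTail_zero_right (t : ℕ) : binomialLowerTail t 0 = 0 := by
  simp [binomialLowerTail]

lemma binomialLowerTail_zero_succ (k : ℕ) : binomialLowerTail 0 (k + 1) = 1 := by
  simp [binomialLowerTail, sum_range_succ', Nat.choose_zero_succ]

lemma binomialLowerTail_succ_succ (t k : ℕ) :
    binomialLowerTail (t + 1) (k + 1) =
      (binomialLowerTail t (k + 1) + binomialLowerTail t k) / 2 := by
  have pascal : ∑ j ∈ range (k + 1), ((t + 1).choose j : ℝ) =
      ∑ j ∈ range (k + 1), (t.choose j : ℝ) + ∑ j ∈ range k, (t.choose j : ℝ) := by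
    rw [sum_range_succ' _ k, sum_range_succ' (fun j => (t.choose j : ℝ)) k]
    simp only [Nat.choose_succ_succ, Nat.cast_add, sum_add_distrib, Nat.choose_zero_right]
    ring
  simp only [binomialLowerTail, ← sum_div, pascal, pow_succ]
  field_simp

namespace lazyLineWalk

variable {m : ℕ}

lemma apply_last (a : Fin (m + 1)) :
    lazyLineWalk (m + 1) a (Fin.last m) = if a = Fin.last m then 1 else 0 := by
  simp [lazyLineWalk]

lemma apply_castSucc (a : Fin (m + 1)) (c : Fin m) :
    lazyLineWalk (m + 1) a c.castSucc = if a = c.castSucc ∨ a = c.succ then 1 / 2 else 0 := by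
  have hc : (c : ℕ) ≠ m + 1 - 1 := by omega
  simp only [lazyLineWalk, of_apply, Fin.ext_iff, Fin.val_castSucc, Fin.val_succ, hc, if_false]

lemma mul_apply_last {ι : Type*} (M : Matrix ι (Fin (m + 1)) ℝ) (r : ι) :
    (M * lazyLineWalk (m + 1)) r (Fin.last m) = M r (Fin.last m) := by
  simp [mul_apply, apply_last]

lemma mul_apply_castSucc {ι : Type*} (M : Matrix ι (Fin (m + 1)) ℝ) (r : ι) (c : Fin m) :
    (M * lazyLineWalk (m + 1)) r c.castSucc = (M r c.castSucc + M r c.succ) / 2 := by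
  have hne : (c.castSucc : Fin (m + 1)) ≠ c.succ := Fin.castSucc_lt_succ.ne
  have hpair (a : Fin (m + 1)) :
      (a = c.castSucc ∨ a = c.succ) ↔ a ∈ ({c.castSucc, c.succ} : Finset _) := by
    simp
  simp only [mul_apply, apply_castSucc, hpair, mul_ite, mul_zero, sum_ite_mem, univ_inter,
    sum_pair hne]
  ring

lemma pow_apply_last_last (t : ℕ) : (lazyLineWalk (m + 1) ^ t) (Fin.last m) (Fin.last m) = 1 := by
  induction t with
  | zero => simp
  | succ t ih => rw [pow_succ, mul_apply_last, ih]

theorem one_sub_pow_apply (t : ℕ) {i : ℕ} (hi : i ≤ m) :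
    1 - (lazyLineWalk (m + 1) ^ t) (Fin.last m) ⟨m - i, by omega⟩ = binomialLowerTail t i := by
  induction t generalizing i with
  | zero =>
    obtain _ | k := i
    · rw [binomialLowerTail_zero_right, sub_eq_zero]; exact (pow_apply_last_last 0).symm
    rw [pow_zero, one_apply_ne (Fin.ne_of_val_ne (by simp; omega)), sub_zero,
      binomialLowerTail_zero_succ]
  | succ t ih =>
    obtain _ | k := i
    · rw [binomialLowerTail_zero_right, sub_eq_zero]; exact (pow_apply_last_last _).symm
    have hnext : (⟨m - (k + 1), by omega⟩ : Fin m).succ = ⟨m - k, by omega⟩ :=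
      Fin.ext (by simp; omega)
    have step := mul_apply_castSucc (lazyLineWalk (m + 1) ^ t) (Fin.last m) ⟨m - (k + 1), by omega⟩
    rw [← pow_succ, Fin.castSucc_mk, hnext] at step
    rw [step, binomialLowerTail_succ_succ, ← ih hi, ← ih (i := k) (by omega)]
    ring

end lazyLineWalk

/-- For the lazy absorbing random walk on the line graph on `n` vertices,
starting from vertex `n - i - 1`, the probability of not being at the terminal
vertex `n-1` after `t` steps equals `∑_{j<i} C(t,j) 2^{-t}`. -/
theorem stmt1 (n : ℕ) (hn : 0 < n) (t i : ℕ) (hi : i < n)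
    (W : Matrix (Fin n) (Fin n) ℝ)
    (hW : ∀ a b : Fin n, W a b =
      if (b : ℕ) = n - 1 then (if a = b then (1 : ℝ) else 0)
      else if a = b ∨ (a : ℕ) = (b : ℕ) + 1 then 1 / 2 else 0) :
    1 - (W ^ t) ⟨n - 1, by omega⟩ ⟨n - i - 1, by omega⟩
      = ∑ j ∈ Finset.range i, (t.choose j : ℝ) / 2 ^ t := by
  obtain ⟨m, rfl⟩ : ∃ m, n = m + 1 := ⟨n - 1, by omega⟩
  obtain rfl : W = lazyLineWalk (m + 1) := Matrix.ext hW
  convert lazyLineWalk.one_sub_pow_apply t (Nat.lt_succ_iff.mp hi) using 3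
  · exact Fin.ext (by simp)
  · exact Fin.ext (by simp; omega)
  · rfl
end

section
/- Let G be a feedforward graph on {0,...,n-1}, n > 1, with all self-edges, unique sink τ = n-1, and such that vertex n-2 has in-degree δ > 1. Define the diffusion matrix Δ by Δ_{ij} = 1/indeg(i) if (j,i) ∈ E, else 0. Then (Δ^t)_{τ, n-2} ≤ t/2^t for all t ≥ 0, and hence (Δ^t)_{τ, n-2} → 0 as t → ∞. -/
open Matrix Finset Filter

/-- In a feedforward graph with all self-edges and unique sink `τ = n-1` (every
vertex reaches `τ`), if vertex `n-2` has in-degree greater than 1, then the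
fidelity of node `n-2` satisfies `(Δ^t)_{τ,n-2} ≤ t/2^t`, and hence vanishes as
`t → ∞`. -/
theorem stmt7 (n : ℕ) (hn : 1 < n) (E : Fin n → Fin n → Prop) [DecidableRel E]
    (hff : ∀ a b, E a b → a ≤ b)
    (hself : ∀ i, E i i)
    (τ : Fin n) (hτ : (τ : ℕ) = n - 1)
    (hreach : ∀ i : Fin n, Relation.ReflTransGen E i τ)
    (hsink : ∀ i : Fin n, i ≠ τ → ∃ j, j ≠ i ∧ E i j)
    (hdeg : 1 < (Finset.univ.filter (fun j => E j (⟨n - 2, by omega⟩ : Fin n))).card)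
    (Δ : Matrix (Fin n) (Fin n) ℝ)
    (hΔ : ∀ i j, Δ i j =
      if E j i then (1 : ℝ) / ((Finset.univ.filter (fun k => E k i)).card : ℝ) else 0) :
    (∀ t : ℕ, (Δ ^ t) τ ⟨n - 2, by omega⟩ ≤ (t : ℝ) / 2 ^ t)
    ∧ Tendsto (fun t : ℕ => (Δ ^ t) τ ⟨n - 2, by omega⟩) atTop (nhds 0) := by
  set v : Fin n := ⟨n - 2, by omega⟩ with hv
  have hvval : (v : ℕ) = n - 2 := rfl
  have hvτ : v ≠ τ := by
    intro h
    have := congrArg Fin.val h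
    rw [hvval, hτ] at this
    omega
  -- entries of Δ are nonnegative
  have hΔnn : ∀ i j, 0 ≤ Δ i j := by
    intro i j; rw [hΔ]; split
    · positivity
    · exact le_rfl
  -- triangularity: (Δ^t) i j = 0 unless j ≤ i
  have htri : ∀ t (i j : Fin n), ¬ j ≤ i → (Δ ^ t) i j = 0 := by
    intro t
    induction t with
    | zero =>
      intro i j h
      rw [pow_zero, Matrix.one_apply, if_neg]
      rintro rfl; exact h le_rfl
    | succ t ih =>
      intro i j h
      rw [pow_succ', Matrix.mul_apply]
      apply Finset.sum_eq_zero
      intro k _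
      by_cases hk : k ≤ i
      · by_cases hjk : j ≤ k
        · exact absurd (hjk.trans hk) h
        · rw [ih k j hjk, mul_zero]
      · rw [hΔ, if_neg (fun hE => hk (hff k i hE)), zero_mul]
  -- nonnegativity of powers
  have hnn : ∀ t (i j : Fin n), 0 ≤ (Δ ^ t) i j := by
    intro t
    induction t with
    | zero =>
      intro i j
      rw [pow_zero, Matrix.one_apply]
      split <;> norm_num
    | succ t ih =>
      intro i j
      rw [pow_succ', Matrix.mul_apply]
      exact Finset.sum_nonneg fun k _ => mul_nonneg (hΔnn i k) (ih k j)
  -- the edge from v to τ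
  have hEvτ : E v τ := by
    obtain ⟨j, hj, hE⟩ := hsink v hvτ
    have h1 : (v : ℕ) ≤ (j : ℕ) := hff v j hE
    have h2 : (j : ℕ) < n := j.isLt
    have h3 : (j : ℕ) ≠ (v : ℕ) := fun h => hj (Fin.ext h)
    have : j = τ := Fin.ext (by rw [hτ]; rw [hvval] at h1 h3; omega)
    rwa [this] at hE
  -- in-degree of τ is at least 2
  have hδτ : 2 ≤ (univ.filter (fun k => E k τ)).card := by
    have hsub : ({v, τ} : Finset (Fin n)) ⊆ univ.filter (fun k => E k τ) := by
      intro k hk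
      simp only [Finset.mem_insert, Finset.mem_singleton] at hk
      rcases hk with rfl | rfl <;> simp [hEvτ, hself]
    calc 2 = ({v, τ} : Finset (Fin n)).card := by
            rw [Finset.card_insert_of_notMem (by simpa using hvτ), Finset.card_singleton]
      _ ≤ _ := Finset.card_le_card hsub
  have hhalf : ∀ c : ℕ, 2 ≤ c → (1 : ℝ) / c ≤ 1 / 2 := by
    intro c hc
    apply one_div_le_one_div_of_le (by norm_num)
    exact_mod_cast hc
  -- key Δ-entry bounds
  have hΔτv : Δ τ v ≤ 1 / 2 := by
    rw [hΔ, if_pos hEvτ]; exact hhalf _ hδτ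
  have hΔττ : Δ τ τ ≤ 1 / 2 := by
    rw [hΔ, if_pos (hself τ)]; exact hhalf _ hδτ
  have hΔvv : Δ v v ≤ 1 / 2 := by
    rw [hΔ, if_pos (hself v)]; exact hhalf _ hdeg
  -- diagonal decay at v
  have hdiag : ∀ t, (Δ ^ t) v v ≤ (1 / 2 : ℝ) ^ t := by
    intro t
    induction t with
    | zero => simp [Matrix.one_apply]
    | succ t ih =>
      rw [pow_succ', Matrix.mul_apply]
      have hsum : ∑ k, Δ v k * (Δ ^ t) k v = Δ v v * (Δ ^ t) v v := by
        apply Finset.sum_eq_single v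
        · intro k _ hk
          by_cases hvk : v ≤ k
          · rw [hΔ, if_neg, zero_mul]
            intro hE
            exact hk (le_antisymm (hff k v hE) hvk)
          · rw [htri t k v hvk, mul_zero]
        · intro h; exact absurd (Finset.mem_univ v) h
      rw [hsum]
      calc Δ v v * (Δ ^ t) v v ≤ (1 / 2) * (1 / 2) ^ t :=
            mul_le_mul hΔvv ih (hnn t v v) (by norm_num)
        _ = (1 / 2 : ℝ) ^ (t + 1) := by ring
  -- main bound
  have hmain : ∀ t : ℕ, (Δ ^ t) τ v ≤ (t : ℝ) / 2 ^ t := by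
    intro t
    induction t with
    | zero => simp [Matrix.one_apply, (Ne.symm hvτ)]
    | succ t ih =>
      rw [pow_succ', Matrix.mul_apply]
      have hsum : ∑ k, Δ τ k * (Δ ^ t) k v
          = Δ τ v * (Δ ^ t) v v + Δ τ τ * (Δ ^ t) τ v := by
        rw [← Finset.sum_pair (f := fun k => Δ τ k * (Δ ^ t) k v) hvτ]
        apply (Finset.sum_subset (Finset.subset_univ _) ?_).symm
        intro k _ hk
        simp only [Finset.mem_insert, Finset.mem_singleton, not_or] at hk
        obtain ⟨hkv, hkτ⟩ := hk
        by_cases hvk : v ≤ k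
        · exfalso
          have h1 : (v : ℕ) ≤ k := hvk
          have h2 : (k : ℕ) < n := k.isLt
          have h3 : (k : ℕ) ≠ (v : ℕ) := fun h => hkv (Fin.ext h)
          have h4 : (k : ℕ) ≠ (τ : ℕ) := fun h => hkτ (Fin.ext h)
          rw [hvval] at h1 h3
          rw [hτ] at h4
          omega
        · rw [htri t k v hvk, mul_zero]
      rw [hsum]
      have h1 : Δ τ v * (Δ ^ t) v v ≤ (1 / 2) * (1 / 2) ^ t :=
        mul_le_mul hΔτv (hdiag t) (hnn t v v) (by norm_num)
      have h2 : Δ τ τ * (Δ ^ t) τ v ≤ (1 / 2) * ((t : ℝ) / 2 ^ t) := by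
        apply mul_le_mul hΔττ ih (hnn t τ v) (by norm_num)
      calc Δ τ v * (Δ ^ t) v v + Δ τ τ * (Δ ^ t) τ v
          ≤ (1 / 2) * (1 / 2) ^ t + (1 / 2) * ((t : ℝ) / 2 ^ t) := add_le_add h1 h2
        _ = ((t : ℕ) + 1 : ℝ) / 2 ^ (t + 1) := by
            rw [div_pow, one_pow, pow_succ]
            ring
        _ = ((t + 1 : ℕ) : ℝ) / 2 ^ (t + 1) := by push_cast; ring
  refine ⟨hmain, ?_⟩
  apply squeeze_zero (fun t => hnn t τ v) hmain
  have := tendsto_self_mul_const_pow_of_lt_one (r := (1 / 2 : ℝ)) (by norm_num) (by norm_num)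
  convert this using 2 with t
  rw [div_pow, one_pow]
  ring
end

section
/- Combining the previous facts: the minimax fidelity of the line graph on n vertices, given by max_a C(a, n-1)/2^a, equals C(2(n-1), n-1)/2^{2(n-1)} and tends to 0 as n → ∞. -/
/-!
Write `f a = C(a, k) / 2^a`. The identity `C(a, k) (a + 1) = C(a + 1, k) (a + 1 - k)` shows that
`f (a + 1) / f a = (a + 1) / (2 (a + 1 - k))`, so `f` increases up to `a = 2k` and decreases
afterwards: its maximum is `C(2k, k) / 4^k`. For the limit, `C(2k+2, k+1) (k+1) = 2 (2k+1) C(2k, k)`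
gives by induction `C(2k, k)^2 (2k + 1) ≤ 16^k`, i.e. `C(2k, k) / 4^k ≤ 1 / √(2k + 1)`.
-/

open Filter Topology

namespace Nat

theorem two_mul_choose_le_choose_succ {a k : ℕ} (h : a < 2 * k) :
    2 * a.choose k ≤ (a + 1).choose k := by
  rcases lt_or_ge a k with hak | hka
  · simp [choose_eq_zero_of_lt hak]
  have key := choose_mul_succ_eq a k
  refine Nat.le_of_mul_le_mul_right (c := a + 1 - k) ?_ (by omega)
  calc 2 * a.choose k * (a + 1 - k) = a.choose k * (2 * (a + 1 - k)) := by ring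
    _ ≤ a.choose k * (a + 1) := Nat.mul_le_mul_left _ (by omega)
    _ = (a + 1).choose k * (a + 1 - k) := key

theorem choose_succ_le_two_mul_choose {a k : ℕ} (h : 2 * k ≤ a + 1) :
    (a + 1).choose k ≤ 2 * a.choose k := by
  have key := choose_mul_succ_eq a k
  refine Nat.le_of_mul_le_mul_right (c := a + 1 - k) ?_ (by omega)
  calc (a + 1).choose k * (a + 1 - k) = a.choose k * (a + 1) := key.symm
    _ ≤ a.choose k * (2 * (a + 1 - k)) := Nat.mul_le_mul_left _ (by omega)
    _ = 2 * a.choose k * (a + 1 - k) := by ring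

theorem centralBinom_sq_mul_le (k : ℕ) : centralBinom k ^ 2 * (2 * k + 1) ≤ 16 ^ k := by
  induction k with
  | zero => simp
  | succ k ih =>
    have hstep := succ_mul_centralBinom_succ k
    refine Nat.le_of_mul_le_mul_left (c := (k + 1) ^ 2) ?_ (by positivity)
    calc (k + 1) ^ 2 * (centralBinom (k + 1) ^ 2 * (2 * (k + 1) + 1))
        = ((k + 1) * centralBinom (k + 1)) ^ 2 * (2 * k + 3) := by ring
      _ = (4 * (2 * k + 1) * (2 * k + 3)) * (centralBinom k ^ 2 * (2 * k + 1)) := by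
          rw [hstep]; ring
      _ ≤ (4 * (2 * k + 1) * (2 * k + 3)) * 16 ^ k := Nat.mul_le_mul_left _ ih
      _ ≤ ((k + 1) ^ 2 * 16) * 16 ^ k := Nat.mul_le_mul_right _ (by nlinarith)
      _ = (k + 1) ^ 2 * 16 ^ (k + 1) := by ring

end Nat

theorem choose_div_two_pow_le_choose_succ_div (k : ℕ) {a : ℕ} (h : a < 2 * k) :
    (a.choose k : ℝ) / 2 ^ a ≤ ((a + 1).choose k : ℝ) / 2 ^ (a + 1) := by
  have hnat : (2 * a.choose k : ℝ) ≤ (a + 1).choose k := by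
    exact_mod_cast Nat.two_mul_choose_le_choose_succ h
  rw [div_le_div_iff₀ (by positivity) (by positivity)]
  calc (a.choose k : ℝ) * 2 ^ (a + 1) = 2 * a.choose k * 2 ^ a := by ring
    _ ≤ (a + 1).choose k * 2 ^ a := by gcongr

theorem choose_succ_div_two_pow_le_choose_div (k : ℕ) {a : ℕ} (h : 2 * k ≤ a + 1) :
    ((a + 1).choose k : ℝ) / 2 ^ (a + 1) ≤ (a.choose k : ℝ) / 2 ^ a := by
  have hnat : ((a + 1).choose k : ℝ) ≤ 2 * a.choose k := by
    exact_mod_cast Nat.choose_succ_le_two_mul_choose h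
  rw [div_le_div_iff₀ (by positivity) (by positivity)]
  calc ((a + 1).choose k : ℝ) * 2 ^ a ≤ 2 * a.choose k * 2 ^ a := by gcongr
    _ = a.choose k * 2 ^ (a + 1) := by ring

theorem two_mul_choose_div_two_pow_eq (k : ℕ) :
    ((2 * k).choose k : ℝ) / 2 ^ (2 * k) = Nat.centralBinom k / 4 ^ k := by
  rw [Nat.centralBinom_eq_two_mul_choose, pow_mul]
  norm_num

theorem choose_div_two_pow_le_centralBinom_div (k a : ℕ) :
    (a.choose k : ℝ) / 2 ^ a ≤ (Nat.centralBinom k : ℝ) / 4 ^ k := by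
  set f : ℕ → ℝ := fun a ↦ (a.choose k : ℝ) / 2 ^ a
  change f a ≤ _
  rw [← two_mul_choose_div_two_pow_eq]
  rcases le_total a (2 * k) with h | h
  · refine monotoneOn_of_le_add_one (f := f) Set.ordConnected_Iic ?_ h Set.self_mem_Iic h
    exact fun b _ _ hb ↦ choose_div_two_pow_le_choose_succ_div k hb
  · refine antitoneOn_of_add_one_le (f := f) Set.ordConnected_Ici ?_ Set.self_mem_Ici h h
    exact fun b _ hb _ ↦ choose_succ_div_two_pow_le_choose_div k (Nat.le_succ_of_le hb)

theorem centralBinom_div_four_pow_le_sqrt (k : ℕ) :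
    (Nat.centralBinom k : ℝ) / 4 ^ k ≤ √(1 / (2 * k + 1)) := by
  rw [Real.le_sqrt (by positivity) (by positivity), div_pow, ← pow_mul, mul_comm k,
    pow_mul, div_le_div_iff₀ (by positivity) (by positivity), one_mul]
  exact_mod_cast Nat.centralBinom_sq_mul_le k

theorem tendsto_centralBinom_div_four_pow :
    Tendsto (fun k : ℕ ↦ (Nat.centralBinom k : ℝ) / 4 ^ k) atTop (𝓝 0) := by
  refine squeeze_zero (fun _ ↦ by positivity) centralBinom_div_four_pow_le_sqrt ?_
  have hden : Tendsto (fun k : ℕ ↦ 2 * (k : ℝ) + 1) atTop atTop :=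
    tendsto_atTop_add_const_right _ _
      (tendsto_natCast_atTop_atTop.const_mul_atTop two_pos)
  simpa [Function.comp_def] using
    (Real.continuous_sqrt.tendsto 0).comp (tendsto_inv_atTop_zero.comp hden)

/-- The minimax fidelity of the line graph on `n` vertices, `max_a C(a,n-1)/2^a`,
equals `C(2(n-1), n-1)/2^{2(n-1)}` (the maximum is attained at `a = 2(n-1)`),
and this quantity tends to `0` as `n → ∞`. -/
theorem stmt11 :
    (∀ n : ℕ, 1 ≤ n → ∀ a : ℕ,
      (a.choose (n - 1) : ℝ) / 2 ^ a
        ≤ ((2 * (n - 1)).choose (n - 1) : ℝ) / 2 ^ (2 * (n - 1)))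
    ∧ Tendsto (fun n : ℕ =>
        ((2 * (n - 1)).choose (n - 1) : ℝ) / 2 ^ (2 * (n - 1))) atTop (nhds 0) := by
  simp only [two_mul_choose_div_two_pow_eq]
  exact ⟨fun n _ a ↦ choose_div_two_pow_le_centralBinom_div (n - 1) a,
    tendsto_centralBinom_div_four_pow.comp (tendsto_sub_atTop_nat 1)⟩
end
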